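/- arXiv:2504.09360 — 2 statements merged into one kernel-verified Lean document; each statement's English description precedes it below -/
import Mathlib

section
/- For any unitary U on N qubits, the average linear operator entanglement over uniformly random Pauli strings satisfies P_E(U) := (1/d²) Σ_{P} E_lin(U† P U) = 1 − d^{-2} Tr( T^A_{(12)(34)} · (U†)^{⊗4} Q U^{⊗4} ), where Q = d^{-2} Σ_P P^{⊗4} and the sum runs over all d² = 4^N Pauli strings P (with +1 phase), d = 2^N. -/
open Matrix Kronecker

/-- The four single-qubit Pauli matrices `I, X, Y, Z`. -/
noncomputable def pauli : Fin 4 → Matrix (Fin 2) (Fin 2) ℂ :=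
  ![1, !![0, 1; 1, 0], !![0, -Complex.I; Complex.I, 0], !![1, 0; 0, -1]]

/-- A Pauli string: the tensor product over the sites `i : ι` of the single-qubit
Pauli matrices `pauli (a i)`. -/
noncomputable def pauliString {ι : Type*} [Fintype ι] (a : ι → Fin 4) :
    Matrix (ι → Fin 2) (ι → Fin 2) ℂ :=
  Matrix.of fun x y => ∏ i, pauli (a i) (x i) (y i)
/-- The partial swap `T^A₁₂` on the doubled space, swapping the two copies of
subsystem `A` and acting as the identity on the two copies of `B`. -/
noncomputable def swapA (α β : Type*) [DecidableEq α] [DecidableEq β] :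
    Matrix ((α × β) × (α × β)) ((α × β) × (α × β)) ℂ :=
  Matrix.of fun p q =>
    if p.1.1 = q.2.1 ∧ p.2.1 = q.1.1 ∧ p.1.2 = q.1.2 ∧ p.2.2 = q.2.2 then 1 else 0

/-- The linear operator entanglement
`E_lin(O) = 1 - d⁻² Tr(T^A₁₂ O^{⊗2} T^A₁₂ (O†)^{⊗2})`, `d = dim(H_A ⊗ H_B)`. -/
noncomputable def ElinC {α β : Type*} [Fintype α] [Fintype β] [DecidableEq α] [DecidableEq β]
    (O : Matrix (α × β) (α × β) ℂ) : ℂ :=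
  1 - (((Fintype.card α : ℂ) * (Fintype.card β : ℂ)) ^ 2)⁻¹ *
    (swapA α β * (O ⊗ₖ O) * swapA α β * (Oᴴ ⊗ₖ Oᴴ)).trace
/-- An `N = N_A + N_B` qubit Pauli string, written as a product operator across the
bipartition into the first `N_A` and the last `N_B` qubits. -/
noncomputable def pauliP {NA NB : ℕ} (a : Fin NA → Fin 4) (b : Fin NB → Fin 4) :
    Matrix ((Fin NA → Fin 2) × (Fin NB → Fin 2)) ((Fin NA → Fin 2) × (Fin NB → Fin 2)) ℂ :=
  pauliString a ⊗ₖ pauliString b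

/-- A Clifford unitary on `N = N_A + N_B` qubits: a unitary mapping every Pauli string
to a Pauli string up to a sign, under conjugation. -/
def IsCliffordP {NA NB : ℕ}
    (C : Matrix ((Fin NA → Fin 2) × (Fin NB → Fin 2)) ((Fin NA → Fin 2) × (Fin NB → Fin 2)) ℂ) :
    Prop :=
  C ∈ Matrix.unitaryGroup ((Fin NA → Fin 2) × (Fin NB → Fin 2)) ℂ ∧
    ∀ (a : Fin NA → Fin 4) (b : Fin NB → Fin 4),
      ∃ (a' : Fin NA → Fin 4) (b' : Fin NB → Fin 4) (s : ℂ), (s = 1 ∨ s = -1) ∧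
        C * pauliP a b * Cᴴ = s • pauliP a' b'

/-- The fourth tensor (Kronecker) power of an operator, on the quadrupled space. -/
noncomputable def tpow4 {γ : Type*} (M : Matrix γ γ ℂ) :
    Matrix ((γ × γ) × (γ × γ)) ((γ × γ) × (γ × γ)) ℂ :=
  (M ⊗ₖ M) ⊗ₖ (M ⊗ₖ M)

/-- The projector `Q = d⁻² Σ_P P^{⊗4}`, summing over all `4^N` Pauli strings
(`+1` phase), `d = 2^N`, `N = N_A + N_B`. -/
noncomputable def Qproj (NA NB : ℕ) :
    Matrix ((((Fin NA → Fin 2) × (Fin NB → Fin 2)) × ((Fin NA → Fin 2) × (Fin NB → Fin 2))) ×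
            (((Fin NA → Fin 2) × (Fin NB → Fin 2)) × ((Fin NA → Fin 2) × (Fin NB → Fin 2))))
           ((((Fin NA → Fin 2) × (Fin NB → Fin 2)) × ((Fin NA → Fin 2) × (Fin NB → Fin 2))) ×
            (((Fin NA → Fin 2) × (Fin NB → Fin 2)) × ((Fin NA → Fin 2) × (Fin NB → Fin 2)))) ℂ :=
  (((2 : ℂ) ^ (NA + NB)) ^ 2)⁻¹ •
    ∑ a : Fin NA → Fin 4, ∑ b : Fin NB → Fin 4, tpow4 (pauliP a b)

/-!
Since `U† P U` is Hermitian, cyclicity of the trace turns `E_lin(U† P U)` into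
`1 - d⁻² Tr((P ⊗ P) A (P ⊗ P) A)` with `A = U^{⊗2} T^A₁₂ (U†)^{⊗2}`, while `T^A₍₁₂₎₍₃₄₎` splits as
`T^A₁₂ ⊗ T^A₃₄` and turns the right-hand side into `1 - d⁻⁴ Σ_P Tr((P ⊗ P) A)²`.
The two sums over Pauli strings agree because `Σ_P P^{⊗4}` is unchanged when the row indices of
the factors `1, 2` are exchanged with those of `3, 4`. This holds for the single-qubit Paulis by a
finite check and is inherited by tensor products, hence by all Pauli strings.
-/

section FourfoldRowSwap

variable {R ι κ n p : Type*} [CommSemiring R] [Fintype ι] [Fintype κ]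

/-- `∑ᵢ Pᵢ ⊗ Pᵢ ⊗ Pᵢ ⊗ Pᵢ` is unchanged when the row indices of the first two tensor factors
are exchanged with those of the last two. -/
def FourfoldRowSwapInvariant (P : ι → Matrix n n R) : Prop :=
  ∀ c₁ c₂ c₃ c₄ d₁ d₂ d₃ d₄,
    ∑ i, P i c₁ d₁ * P i c₂ d₂ * P i c₃ d₃ * P i c₄ d₄ =
      ∑ i, P i c₃ d₁ * P i c₄ d₂ * P i c₁ d₃ * P i c₂ d₄

namespace FourfoldRowSwapInvariant

lemma map {S : Type*} [CommSemiring S] {P : ι → Matrix n n R} (h : FourfoldRowSwapInvariant P)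
    (f : R →+* S) : FourfoldRowSwapInvariant fun i => (P i).map f := by
  intro c₁ c₂ c₃ c₄ d₁ d₂ d₃ d₄
  simpa only [Matrix.map_apply, map_sum, map_mul] using congrArg f (h c₁ c₂ c₃ c₄ d₁ d₂ d₃ d₄)

lemma kronecker {P : ι → Matrix n n R} {Q : κ → Matrix p p R} (hP : FourfoldRowSwapInvariant P)
    (hQ : FourfoldRowSwapInvariant Q) :
    FourfoldRowSwapInvariant fun i : ι × κ => P i.1 ⊗ₖ Q i.2 := by
  intro c₁ c₂ c₃ c₄ d₁ d₂ d₃ d₄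
  have hsplit : ∀ e₁ e₂ e₃ e₄ : n × p,
      ∑ i : ι × κ, (P i.1 ⊗ₖ Q i.2) e₁ d₁ * (P i.1 ⊗ₖ Q i.2) e₂ d₂ *
          (P i.1 ⊗ₖ Q i.2) e₃ d₃ * (P i.1 ⊗ₖ Q i.2) e₄ d₄ =
        (∑ i, P i e₁.1 d₁.1 * P i e₂.1 d₂.1 * P i e₃.1 d₃.1 * P i e₄.1 d₄.1) *
          ∑ j, Q j e₁.2 d₁.2 * Q j e₂.2 d₂.2 * Q j e₃.2 d₃.2 * Q j e₄.2 d₄.2 := by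
    intro e₁ e₂ e₃ e₄
    rw [Fintype.sum_mul_sum, ← Fintype.sum_prod_type']
    exact Fintype.sum_congr _ _ fun i => by simp only [kroneckerMap_apply]; ring
  rw [hsplit, hsplit, hP, hQ]

lemma pi {σ : Type*} [Fintype σ] [DecidableEq σ] {P : ι → Matrix n n R}
    (h : FourfoldRowSwapInvariant P) :
    FourfoldRowSwapInvariant fun a : σ → ι =>
      Matrix.of fun x y : σ → n => ∏ s, P (a s) (x s) (y s) := by
  intro c₁ c₂ c₃ c₄ d₁ d₂ d₃ d₄
  have hfactor : ∀ e₁ e₂ e₃ e₄ : σ → n,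
      ∑ a : σ → ι, (∏ s, P (a s) (e₁ s) (d₁ s)) * (∏ s, P (a s) (e₂ s) (d₂ s)) *
          (∏ s, P (a s) (e₃ s) (d₃ s)) * (∏ s, P (a s) (e₄ s) (d₄ s)) =
        ∏ s, ∑ i, P i (e₁ s) (d₁ s) * P i (e₂ s) (d₂ s) *
          P i (e₃ s) (d₃ s) * P i (e₄ s) (d₄ s) := by
    intro e₁ e₂ e₃ e₄
    simp only [Fintype.prod_sum, Finset.prod_mul_distrib]
  simp only [Matrix.of_apply, hfactor]
  exact Finset.prod_congr rfl fun s _ => h _ _ _ _ _ _ _ _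

end FourfoldRowSwapInvariant

end FourfoldRowSwap

section TraceIdentity

variable {R m ι : Type*} [CommSemiring R] [Fintype m] [Fintype ι]

lemma trace_mul_mul_mul_mul_eq_sum (M A : Matrix m m R) :
    (M * A * M * A).trace = ∑ x, ∑ z, ∑ y, ∑ w, M x y * A y z * (M z w * A w x) := by
  rw [Matrix.mul_assoc (M * A)]
  simp only [Matrix.trace, Matrix.diag, Matrix.mul_apply, Finset.sum_mul, Finset.mul_sum]
  exact Fintype.sum_congr _ _ fun x => Fintype.sum_congr _ _ fun z => Finset.sum_comm

lemma trace_mul_sq_eq_sum (M A : Matrix m m R) :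
    (M * A).trace ^ 2 = ∑ x, ∑ z, ∑ y, ∑ w, M x y * A y x * (M z w * A w z) := by
  simp only [sq, Matrix.trace, Matrix.diag, Matrix.mul_apply, Finset.sum_mul_sum]

lemma sum_trace_mul_mul_mul_mul_eq_sum_trace_mul_sq (M : ι → Matrix m m R) (A : Matrix m m R)
    (hM : ∀ x y z w, ∑ i, M i x y * M i z w = ∑ i, M i z y * M i x w) :
    ∑ i, (M i * A * M i * A).trace = ∑ i, (M i * A).trace ^ 2 := by
  have hswap : ∀ x z y w, ∑ i, M i z y * A y x * (M i x w * A w z)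
      = ∑ i, M i x y * A y x * (M i z w * A w z) := fun x z y w => by
    simpa only [Finset.sum_mul, mul_mul_mul_comm] using congrArg (· * (A y x * A w z)) (hM z y x w)
  simp only [trace_mul_mul_mul_mul_eq_sum, trace_mul_sq_eq_sum, Finset.sum_comm (γ := ι)]
  rw [Finset.sum_comm]
  exact Fintype.sum_congr _ _ fun x => Fintype.sum_congr _ _ fun z =>
    Fintype.sum_congr _ _ fun y => Fintype.sum_congr _ _ fun w => hswap x z y w

lemma FourfoldRowSwapInvariant.sum_trace_kronecker_self_mul_mul_mul_mul {n : Type*} [Fintype n]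
    {P : ι → Matrix n n R} (h : FourfoldRowSwapInvariant P) (A : Matrix (n × n) (n × n) R) :
    ∑ i, ((P i ⊗ₖ P i) * A * (P i ⊗ₖ P i) * A).trace = ∑ i, ((P i ⊗ₖ P i) * A).trace ^ 2 := by
  refine sum_trace_mul_mul_mul_mul_eq_sum_trace_mul_sq _ A fun x y z w => ?_
  simpa only [kroneckerMap_apply, mul_assoc] using h x.1 x.2 z.1 z.2 y.1 y.2 w.1 w.2

end TraceIdentity

/-- `pauli` with entries in `ℤ[i]`, where the single-site identity can be decided. -/
def pauliZi : Fin 4 → Matrix (Fin 2) (Fin 2) GaussianInt :=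
  ![1, !![0, 1; 1, 0], !![0, -⟨0, 1⟩; ⟨0, 1⟩, 0], !![1, 0; 0, -1]]

lemma pauli_eq_map_pauliZi (k : Fin 4) : pauli k = (pauliZi k).map GaussianInt.toComplex := by
  ext i j
  fin_cases k <;> fin_cases i <;> fin_cases j <;>
    simp [pauli, pauliZi, GaussianInt.toComplex_def]

lemma fourfoldRowSwapInvariant_pauliZi : FourfoldRowSwapInvariant pauliZi := by
  unfold FourfoldRowSwapInvariant; decide

lemma fourfoldRowSwapInvariant_pauli : FourfoldRowSwapInvariant pauli := by
  simpa only [← pauli_eq_map_pauliZi] using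
    fourfoldRowSwapInvariant_pauliZi.map GaussianInt.toComplex

lemma fourfoldRowSwapInvariant_pauliString (σ : Type*) [Fintype σ] [DecidableEq σ] :
    FourfoldRowSwapInvariant (pauliString (ι := σ)) :=
  fourfoldRowSwapInvariant_pauli.pi

lemma pauli_isHermitian (k : Fin 4) : (pauli k).IsHermitian := by
  ext i j
  fin_cases k <;> fin_cases i <;> fin_cases j <;> simp [pauli]

lemma pauliString_isHermitian {σ : Type*} [Fintype σ] (a : σ → Fin 4) :
    (pauliString a).IsHermitian := by
  ext x y
  simp only [conjTranspose_apply, pauliString, of_apply, star_prod]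
  exact Finset.prod_congr rfl fun s _ => congrFun (congrFun (pauli_isHermitian (a s)) _) _

lemma pauliP_isHermitian {NA NB : ℕ} (a : Fin NA → Fin 4) (b : Fin NB → Fin 4) :
    (pauliP a b).IsHermitian := by
  rw [IsHermitian, pauliP, conjTranspose_kronecker, (pauliString_isHermitian a).eq,
    (pauliString_isHermitian b).eq]

lemma fourfoldRowSwapInvariant_pauliP (NA NB : ℕ) :
    FourfoldRowSwapInvariant fun i : (Fin NA → Fin 4) × (Fin NB → Fin 4) => pauliP i.1 i.2 :=
  (fourfoldRowSwapInvariant_pauliString _).kronecker (fourfoldRowSwapInvariant_pauliString _)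

lemma sum_trace_pauliP_kronecker_self_mul_mul_mul_mul {NA NB : ℕ}
    (A : Matrix (((Fin NA → Fin 2) × (Fin NB → Fin 2)) × ((Fin NA → Fin 2) × (Fin NB → Fin 2)))
      (((Fin NA → Fin 2) × (Fin NB → Fin 2)) × ((Fin NA → Fin 2) × (Fin NB → Fin 2))) ℂ) :
    ∑ a : Fin NA → Fin 4, ∑ b : Fin NB → Fin 4,
        ((pauliP a b ⊗ₖ pauliP a b) * A * (pauliP a b ⊗ₖ pauliP a b) * A).trace =
      ∑ a : Fin NA → Fin 4, ∑ b : Fin NB → Fin 4, ((pauliP a b ⊗ₖ pauliP a b) * A).trace ^ 2 := by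
  simpa only [Fintype.sum_prod_type] using
    (fourfoldRowSwapInvariant_pauliP NA NB).sum_trace_kronecker_self_mul_mul_mul_mul A

lemma ElinC_conj_of_isHermitian {α β : Type*} [Fintype α] [Fintype β] [DecidableEq α]
    [DecidableEq β] (V P : Matrix (α × β) (α × β) ℂ) (hP : P.IsHermitian) :
    ElinC (Vᴴ * P * V) = 1 - (((Fintype.card α : ℂ) * (Fintype.card β : ℂ)) ^ 2)⁻¹ *
      ((P ⊗ₖ P) * ((V ⊗ₖ V) * swapA α β * (Vᴴ ⊗ₖ Vᴴ)) * (P ⊗ₖ P) *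
        ((V ⊗ₖ V) * swapA α β * (Vᴴ ⊗ₖ Vᴴ))).trace := by
  have hO : (Vᴴ * P * V)ᴴ = Vᴴ * P * V := by
    rw [conjTranspose_mul, conjTranspose_mul, hP.eq, conjTranspose_conjTranspose, mul_assoc]
  rw [ElinC, hO, mul_kronecker_mul, mul_kronecker_mul]
  congr 2
  set T := swapA α β
  calc (T * ((Vᴴ ⊗ₖ Vᴴ) * (P ⊗ₖ P) * (V ⊗ₖ V)) * T * ((Vᴴ ⊗ₖ Vᴴ) * (P ⊗ₖ P) * (V ⊗ₖ V))).trace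
      = ((T * (Vᴴ ⊗ₖ Vᴴ)) *
          ((P ⊗ₖ P) * ((V ⊗ₖ V) * T * (Vᴴ ⊗ₖ Vᴴ)) * (P ⊗ₖ P) * (V ⊗ₖ V))).trace := by
        simp only [mul_assoc]
    _ = (((P ⊗ₖ P) * ((V ⊗ₖ V) * T * (Vᴴ ⊗ₖ Vᴴ)) * (P ⊗ₖ P) * (V ⊗ₖ V)) *
          (T * (Vᴴ ⊗ₖ Vᴴ))).trace := trace_mul_comm _ _
    _ = _ := by simp only [mul_assoc]

lemma trace_kronecker_mul_tpow4_conj {γ : Type*} [Fintype γ] (T : Matrix (γ × γ) (γ × γ) ℂ)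
    (V P : Matrix γ γ ℂ) :
    ((T ⊗ₖ T) * tpow4 (Vᴴ * P * V)).trace =
      ((P ⊗ₖ P) * ((V ⊗ₖ V) * T * (Vᴴ ⊗ₖ Vᴴ))).trace ^ 2 := by
  rw [tpow4, ← mul_kronecker_mul, trace_kronecker, ← sq, mul_kronecker_mul, mul_kronecker_mul]
  calc (T * ((Vᴴ ⊗ₖ Vᴴ) * (P ⊗ₖ P) * (V ⊗ₖ V))).trace ^ 2
      = ((T * (Vᴴ ⊗ₖ Vᴴ)) * ((P ⊗ₖ P) * (V ⊗ₖ V))).trace ^ 2 := by simp only [mul_assoc]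
    _ = (((P ⊗ₖ P) * (V ⊗ₖ V)) * (T * (Vᴴ ⊗ₖ Vᴴ))).trace ^ 2 := by rw [trace_mul_comm]
    _ = _ := by simp only [mul_assoc]

lemma tpow4_mul {γ : Type*} [Fintype γ] (X Y : Matrix γ γ ℂ) :
    tpow4 X * tpow4 Y = tpow4 (X * Y) := by
  simp only [tpow4, ← mul_kronecker_mul]

theorem pauli_entangling_power_formula_general {NA NB : ℕ}
    (U : Matrix ((Fin NA → Fin 2) × (Fin NB → Fin 2))
      ((Fin NA → Fin 2) × (Fin NB → Fin 2)) ℂ) :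
    ((4 : ℂ) ^ (NA + NB))⁻¹ *
        ∑ a : Fin NA → Fin 4, ∑ b : Fin NB → Fin 4, ElinC (Uᴴ * pauliP a b * U) =
      1 - (((2 : ℂ) ^ (NA + NB)) ^ 2)⁻¹ *
        ((swapA (Fin NA → Fin 2) (Fin NB → Fin 2) ⊗ₖ swapA (Fin NA → Fin 2) (Fin NB → Fin 2)) *
          (tpow4 Uᴴ * Qproj NA NB * tpow4 U)).trace := by
  have h4 : ((2 : ℂ) ^ (NA + NB)) ^ 2 = 4 ^ (NA + NB) := by
    rw [← pow_mul, mul_comm, pow_mul]; norm_num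
  have hd : ((Fintype.card (Fin NA → Fin 2) : ℂ) * Fintype.card (Fin NB → Fin 2)) ^ 2 =
      4 ^ (NA + NB) := by
    simp [← h4, pow_add]
  simp only [ElinC_conj_of_isHermitian _ _ (pauliP_isHermitian _ _), hd, h4]
  set T := swapA (Fin NA → Fin 2) (Fin NB → Fin 2)
  have hQ : ((T ⊗ₖ T) * (tpow4 Uᴴ * Qproj NA NB * tpow4 U)).trace =
      ((4 : ℂ) ^ (NA + NB))⁻¹ * ∑ a : Fin NA → Fin 4, ∑ b : Fin NB → Fin 4,
        ((pauliP a b ⊗ₖ pauliP a b) * ((U ⊗ₖ U) * T * (Uᴴ ⊗ₖ Uᴴ))).trace ^ 2 := by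
    simp only [Qproj, Matrix.mul_smul, Matrix.smul_mul, Matrix.mul_sum, Matrix.sum_mul, tpow4_mul,
      trace_smul, trace_sum, trace_kronecker_mul_tpow4_conj, smul_eq_mul, h4]
  simp only [hQ, Finset.sum_sub_distrib, ← Finset.mul_sum, Finset.sum_const, Finset.card_univ,
    Fintype.card_fun, Fintype.card_fin, nsmul_eq_mul, mul_one]
  rw [sum_trace_pauliP_kronecker_self_mul_mul_mul_mul]
  push_cast
  rw [← pow_add]
  field_simp

/-- the average linear operator entanglement of Heisenberg-evolved
Pauli strings (the Pauli-entangling power) equals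
`1 − d⁻² Tr(T^A₍₁₂₎₍₃₄₎ (U†)^{⊗4} Q U^{⊗4})`, where `T^A₍₁₂₎₍₃₄₎ = T^A₁₂ ⊗ T^A₃₄`
permutes the four `A`-factors by `(12)(34)`. -/
theorem pauli_entangling_power_formula {NA NB : ℕ}
    (U : Matrix ((Fin NA → Fin 2) × (Fin NB → Fin 2))
      ((Fin NA → Fin 2) × (Fin NB → Fin 2)) ℂ)
    (hU : U ∈ Matrix.unitaryGroup ((Fin NA → Fin 2) × (Fin NB → Fin 2)) ℂ) :
    ((4 : ℂ) ^ (NA + NB))⁻¹ *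
        ∑ a : Fin NA → Fin 4, ∑ b : Fin NB → Fin 4, ElinC (Uᴴ * pauliP a b * U) =
      1 - (((2 : ℂ) ^ (NA + NB)) ^ 2)⁻¹ *
        ((swapA (Fin NA → Fin 2) (Fin NB → Fin 2) ⊗ₖ swapA (Fin NA → Fin 2) (Fin NB → Fin 2)) *
          (tpow4 Uᴴ * Qproj NA NB * tpow4 U)).trace :=
  pauli_entangling_power_formula_general U
end

section
/- The Pauli-entangling power is invariant under Clifford post-processing and local pre-processing: for any unitary U on N qubits, local unitaries V_A on the first N_A qubits and V_B on the remaining N_B qubits, and any Clifford unitary C, P_E(C · U · (V_A ⊗ V_B)) = P_E(U). -/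
open Matrix Kronecker

/-- The Pauli-entangling power: the average linear operator entanglement generated by
`U` on Heisenberg-evolved Pauli strings, the average running over all `4^N` Pauli
strings with `+1` phase (`N = N_A + N_B`). -/
noncomputable def PEC {NA NB : ℕ}
    (U : Matrix ((Fin NA → Fin 2) × (Fin NB → Fin 2))
      ((Fin NA → Fin 2) × (Fin NB → Fin 2)) ℂ) : ℂ :=
  ((4 : ℂ) ^ (NA + NB))⁻¹ *
    ∑ a : Fin NA → Fin 4, ∑ b : Fin NB → Fin 4, ElinC (Uᴴ * pauliP a b * U)

/-!
Both sides are averages over the `4^N` Pauli strings. Conjugation by the Clifford `C` permutes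
the Pauli strings up to signs (the induced map on labels is injective because distinct Pauli
strings are orthogonal for the Hilbert–Schmidt inner product), so `C` only reindexes the average.
In each term the remaining sign drops out since `E_lin` is insensitive to unimodular scalars, and
the local unitaries drop out since their doubles commute with the partial swap `T^A₁₂`.
-/

section SwapA

variable {α β : Type*} [Fintype α] [Fintype β] [DecidableEq α] [DecidableEq β]

lemma swapA_mul_apply (M : Matrix ((α × β) × (α × β)) ((α × β) × (α × β)) ℂ) (p q) :
    (swapA α β * M) p q = M ((p.2.1, p.1.2), (p.1.1, p.2.2)) q := by
  simp [mul_apply, swapA, Fintype.sum_prod_type, ite_and]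

lemma mul_swapA_apply (M : Matrix ((α × β) × (α × β)) ((α × β) × (α × β)) ℂ) (p q) :
    (M * swapA α β) p q = M p ((q.2.1, q.1.2), (q.1.1, q.2.2)) := by
  simp [mul_apply, swapA, Fintype.sum_prod_type, ite_and]

lemma commute_swapA_kronecker_self (A : Matrix α α ℂ) (B : Matrix β β ℂ) :
    Commute (swapA α β) ((A ⊗ₖ B) ⊗ₖ (A ⊗ₖ B)) := by
  ext p q
  rw [swapA_mul_apply, mul_swapA_apply]
  simp only [kroneckerMap_apply]
  ring

end SwapA

lemma trace_conj_conj_conjTranspose_of_commute {n R : Type*} [Fintype n] [DecidableEq n]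
    [CommRing R] [StarRing R] {T X Y : Matrix n n R}
    (hX : X ∈ unitaryGroup n R) (hY : Y ∈ unitaryGroup n R)
    (hTX : Commute T X) (hTY : Commute T Y) (K : Matrix n n R) :
    (T * (X * K * Y) * T * (X * K * Y)ᴴ).trace = (T * K * T * Kᴴ).trace := by
  have hXX : Xᴴ * X = 1 := mem_unitaryGroup_iff'.mp hX
  have hYY : Y * Yᴴ = 1 := mem_unitaryGroup_iff.mp hY
  calc (T * (X * K * Y) * T * (X * K * Y)ᴴ).trace
      = (X * (T * K * T * (Y * Yᴴ) * Kᴴ) * Xᴴ).trace := by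
        simp only [conjTranspose_mul, Matrix.mul_assoc, ← hTY.eq]
        simp only [← Matrix.mul_assoc, hTX.eq]
    _ = (T * K * T * Kᴴ).trace := by
        rw [trace_mul_comm, ← Matrix.mul_assoc, hXX, hYY, Matrix.one_mul, Matrix.mul_one]

lemma ElinC_kronecker_mul_mul_kronecker {α β : Type*} [Fintype α] [Fintype β] [DecidableEq α]
    [DecidableEq β] {XA YA : Matrix α α ℂ} {XB YB : Matrix β β ℂ}
    (hXA : XA ∈ unitaryGroup α ℂ) (hXB : XB ∈ unitaryGroup β ℂ)
    (hYA : YA ∈ unitaryGroup α ℂ) (hYB : YB ∈ unitaryGroup β ℂ)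
    (O : Matrix (α × β) (α × β) ℂ) :
    ElinC ((XA ⊗ₖ XB) * O * (YA ⊗ₖ YB)) = ElinC O := by
  have hX := kronecker_mem_unitary hXA hXB
  have hY := kronecker_mem_unitary hYA hYB
  rw [ElinC, ElinC, ← conjTranspose_kronecker, mul_kronecker_mul, mul_kronecker_mul,
    trace_conj_conj_conjTranspose_of_commute (kronecker_mem_unitary hX hX)
      (kronecker_mem_unitary hY hY) (commute_swapA_kronecker_self XA XB)
      (commute_swapA_kronecker_self YA YB), conjTranspose_kronecker]

lemma ElinC_smul {α β : Type*} [Fintype α] [Fintype β] [DecidableEq α] [DecidableEq β]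
    {s : ℂ} (hs : star s * s = 1) (O : Matrix (α × β) (α × β) ℂ) :
    ElinC (s • O) = ElinC O := by
  have hs2 : (star s * star s) * (s * s) = 1 := by
    rw [mul_mul_mul_comm, hs, one_mul]
  rw [ElinC, ElinC, conjTranspose_smul, smul_kronecker, kronecker_smul, kronecker_smul,
    smul_kronecker]
  simp only [Matrix.mul_smul, Matrix.smul_mul, smul_smul, hs2, one_smul]

lemma trace_pauli_mul_conjTranspose (i j : Fin 4) :
    (pauli i * (pauli j)ᴴ).trace = if i = j then 2 else 0 := by
  simp only [trace, diag_apply, mul_apply, conjTranspose_apply, Fin.sum_univ_two]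
  fin_cases i <;> fin_cases j <;> simp [pauli, one_add_one_eq_two]

lemma trace_pauliString_mul_conjTranspose_eq_prod {ι : Type*} [Fintype ι] [DecidableEq ι]
    (a c : ι → Fin 4) :
    (pauliString a * (pauliString c)ᴴ).trace = ∏ i, (pauli (a i) * (pauli (c i))ᴴ).trace := by
  simp only [trace, diag_apply, mul_apply, conjTranspose_apply, pauliString, of_apply, star_prod,
    ← Finset.prod_mul_distrib]
  rw [Fintype.prod_sum]
  simp only [Fintype.prod_sum]

lemma trace_pauliString_mul_conjTranspose {ι : Type*} [Fintype ι] [DecidableEq ι]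
    (a c : ι → Fin 4) :
    (pauliString a * (pauliString c)ᴴ).trace = if a = c then 2 ^ Fintype.card ι else 0 := by
  simp only [trace_pauliString_mul_conjTranspose_eq_prod, trace_pauli_mul_conjTranspose]
  split_ifs with hac
  · simp [hac]
  · obtain ⟨i, hi⟩ := Function.ne_iff.mp hac
    exact Finset.prod_eq_zero (Finset.mem_univ i) (if_neg hi)

lemma trace_pauliP_mul_conjTranspose {NA NB : ℕ} (a c : Fin NA → Fin 4)
    (b d : Fin NB → Fin 4) :
    (pauliP a b * (pauliP c d)ᴴ).trace = if a = c ∧ b = d then 2 ^ NA * 2 ^ NB else 0 := by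
  rw [pauliP, pauliP, conjTranspose_kronecker, ← mul_kronecker_mul, trace_kronecker,
    trace_pauliString_mul_conjTranspose, trace_pauliString_mul_conjTranspose,
    ite_zero_mul_ite_zero, Fintype.card_fin, Fintype.card_fin]

lemma eq_of_pauliP_eq_smul {NA NB : ℕ} {a c : Fin NA → Fin 4} {b d : Fin NB → Fin 4} {s : ℂ}
    (hs : s ≠ 0) (h : pauliP a b = s • pauliP c d) : a = c ∧ b = d := by
  have htr := congrArg (fun M => (M * (pauliP c d)ᴴ).trace) h
  simp only [smul_mul, trace_smul, trace_pauliP_mul_conjTranspose, and_self, if_true,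
    smul_eq_mul] at htr
  by_contra hne
  rw [if_neg hne] at htr
  exact mul_ne_zero hs (by simp) htr.symm

namespace IsCliffordP

variable {NA NB : ℕ}
  {C : Matrix ((Fin NA → Fin 2) × (Fin NB → Fin 2))
    ((Fin NA → Fin 2) × (Fin NB → Fin 2)) ℂ}

lemma exists_conjTranspose_mul_pauliP_mul (hC : IsCliffordP C) (a : Fin NA → Fin 4)
    (b : Fin NB → Fin 4) :
    ∃ (a' : Fin NA → Fin 4) (b' : Fin NB → Fin 4) (s : ℂ), (s = 1 ∨ s = -1) ∧
      Cᴴ * pauliP a' b' * C = s • pauliP a b := by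
  obtain ⟨a', b', s, hs, h⟩ := hC.2 a b
  refine ⟨a', b', s, hs, ?_⟩
  have hCC : Cᴴ * C = 1 := mem_unitaryGroup_iff'.mp hC.1
  calc Cᴴ * pauliP a' b' * C = s • (Cᴴ * (s • pauliP a' b') * C) := by
        simp only [Matrix.mul_smul, Matrix.smul_mul, smul_smul, mul_self_eq_one_iff.mpr hs,
          one_smul]
    _ = s • pauliP a b := by
        rw [← h, Matrix.mul_assoc, Matrix.mul_assoc, Matrix.mul_assoc, hCC, Matrix.mul_one,
          ← Matrix.mul_assoc, hCC, Matrix.one_mul]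

lemma exists_bijective_conjTranspose_mul_pauliP_mul (hC : IsCliffordP C) :
    ∃ (φ : (Fin NA → Fin 4) × (Fin NB → Fin 4) → (Fin NA → Fin 4) × (Fin NB → Fin 4))
      (s : (Fin NA → Fin 4) × (Fin NB → Fin 4) → ℂ),
      φ.Bijective ∧ (∀ p, s p = 1 ∨ s p = -1) ∧
      ∀ p, Cᴴ * pauliP (φ p).1 (φ p).2 * C = s p • pauliP p.1 p.2 := by
  choose a' b' s hs h using hC.exists_conjTranspose_mul_pauliP_mul
  refine ⟨fun p => (a' p.1 p.2, b' p.1 p.2), fun p => s p.1 p.2, ?_, fun p => hs p.1 p.2,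
    fun p => h p.1 p.2⟩
  refine Finite.injective_iff_bijective.mp fun p q hpq => ?_
  obtain ⟨ha, hb⟩ := Prod.mk.inj hpq
  have hsmul : s p.1 p.2 • pauliP p.1 p.2 = s q.1 q.2 • pauliP q.1 q.2 := by
    rw [← h, ← h, ha, hb]
  have hne : s p.1 p.2 * s q.1 q.2 ≠ 0 :=
    mul_ne_zero (left_ne_zero_of_mul_eq_one (mul_self_eq_one_iff.mpr (hs _ _)))
      (left_ne_zero_of_mul_eq_one (mul_self_eq_one_iff.mpr (hs _ _)))
  obtain ⟨h1, h2⟩ := eq_of_pauliP_eq_smul hne <| by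
    rw [← smul_smul, ← hsmul, smul_smul, mul_self_eq_one_iff.mpr (hs _ _), one_smul]
  exact Prod.ext h1 h2

end IsCliffordP

theorem PEC_invariance_general {NA NB : ℕ}
    (U C : Matrix ((Fin NA → Fin 2) × (Fin NB → Fin 2))
      ((Fin NA → Fin 2) × (Fin NB → Fin 2)) ℂ)
    (VA : Matrix (Fin NA → Fin 2) (Fin NA → Fin 2) ℂ)
    (VB : Matrix (Fin NB → Fin 2) (Fin NB → Fin 2) ℂ)
    (hVA : VA ∈ Matrix.unitaryGroup (Fin NA → Fin 2) ℂ)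
    (hVB : VB ∈ Matrix.unitaryGroup (Fin NB → Fin 2) ℂ)
    (hC : IsCliffordP C) :
    PEC (C * U * (VA ⊗ₖ VB)) = PEC U := by
  obtain ⟨φ, s, hφ, hs, hconj⟩ := hC.exists_bijective_conjTranspose_mul_pauliP_mul
  have hVA' : VAᴴ ∈ unitaryGroup _ ℂ := Unitary.star_mem hVA
  have hVB' : VBᴴ ∈ unitaryGroup _ ℂ := Unitary.star_mem hVB
  simp only [PEC, ← Fintype.sum_prod_type']
  set W := VA ⊗ₖ VB
  refine congrArg (((4 : ℂ) ^ (NA + NB))⁻¹ * ·)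
    (Fintype.sum_bijective φ hφ _ _ fun p => ?_).symm
  calc ElinC (Uᴴ * pauliP p.1 p.2 * U)
      = ElinC (s p • ((VAᴴ ⊗ₖ VBᴴ) * (Uᴴ * pauliP p.1 p.2 * U) * W)) := by
        rw [ElinC_smul (by rcases hs p with h | h <;> simp [h]),
          ElinC_kronecker_mul_mul_kronecker hVA' hVB' hVA hVB]
    _ = ElinC (Wᴴ * (Uᴴ * (Cᴴ * pauliP (φ p).1 (φ p).2 * C) * U) * W) := by
        rw [hconj, conjTranspose_kronecker]
        simp only [Matrix.mul_smul, Matrix.smul_mul]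
    _ = ElinC ((C * U * W)ᴴ * pauliP (φ p).1 (φ p).2 * (C * U * W)) := by
        simp only [conjTranspose_mul, Matrix.mul_assoc]

/-- the Pauli-entangling power is invariant under Clifford
post-processing and local unitary pre-processing:
`P_E(C · U · (V_A ⊗ V_B)) = P_E(U)`. -/
theorem PEC_invariance {NA NB : ℕ}
    (U C : Matrix ((Fin NA → Fin 2) × (Fin NB → Fin 2))
      ((Fin NA → Fin 2) × (Fin NB → Fin 2)) ℂ)
    (hU : U ∈ Matrix.unitaryGroup ((Fin NA → Fin 2) × (Fin NB → Fin 2)) ℂ)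
    (VA : Matrix (Fin NA → Fin 2) (Fin NA → Fin 2) ℂ)
    (VB : Matrix (Fin NB → Fin 2) (Fin NB → Fin 2) ℂ)
    (hVA : VA ∈ Matrix.unitaryGroup (Fin NA → Fin 2) ℂ)
    (hVB : VB ∈ Matrix.unitaryGroup (Fin NB → Fin 2) ℂ)
    (hC : IsCliffordP C) :
    PEC (C * U * (VA ⊗ₖ VB)) = PEC U :=
  PEC_invariance_general U C VA VB hVA hVB hC
end
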